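/- arXiv:2010.07723 — 5 statements merged into one kernel-verified Lean document; each statement's English description precedes it below -/
import Mathlib

section
/- Let u : ℝ × (0,∞) → ℝ be a smooth solution of the KdV equation ∂_t u + 2 u ∂_x u + (1/6) ∂_x³ u = 0. Define U : ℝ × (0,∞) → ℝ by U(ρ,T) := T^{-1} · u(−ρ T^{-1/2}, T^{-1/2}) + (1/2) ρ T^{-1}. Then U solves the cylindrical KdV equation ∂_T U + (1/12) ∂_ρ³ U + U ∂_ρ U + U/(2T) = 0 at every point of ℝ × (0,∞). -/
/-- If `u` is a smooth solution of the KdV equation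
`∂_t u + 2 u ∂_x u + (1/6) ∂_x³ u = 0` on `ℝ × (0,∞)`, then
`U(ρ,T) := T⁻¹ · u(−ρ T^{-1/2}, T^{-1/2}) + (1/2) ρ T⁻¹` solves the cylindrical KdV equation
`∂_T U + (1/12) ∂_ρ³ U + U ∂_ρ U + U/(2T) = 0` on `ℝ × (0,∞)`. -/
theorem stmt_0 (u U : ℝ → ℝ → ℝ)
    (hu_smooth : ContDiffOn ℝ (⊤ : ℕ∞) (fun p : ℝ × ℝ => u p.1 p.2) {p : ℝ × ℝ | 0 < p.2})
    (hKdV : ∀ x t : ℝ, 0 < t →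
      deriv (fun s => u x s) t + 2 * u x t * deriv (fun y => u y t) x
        + (1 / 6) * iteratedDeriv 3 (fun y => u y t) x = 0)
    (hU : ∀ ρ T : ℝ, 0 < T →
      U ρ T = T⁻¹ * u (-ρ * T ^ (-(1 / 2) : ℝ)) (T ^ (-(1 / 2) : ℝ)) + (1 / 2) * ρ * T⁻¹) :
    ∀ ρ T : ℝ, 0 < T →
      deriv (fun S => U ρ S) T + (1 / 12) * iteratedDeriv 3 (fun r => U r T) ρ
        + U ρ T * deriv (fun r => U r T) ρ + U ρ T / (2 * T) = 0 := by
  intro ρ T hT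
  have hT' : T ≠ 0 := ne_of_gt hT
  obtain ⟨s, hsdef⟩ : ∃ s : ℝ, s = T ^ (-(1 / 2) : ℝ) := ⟨_, rfl⟩
  have hs : 0 < s := by rw [hsdef]; positivity
  have hs2 : s * s = T⁻¹ := by
    rw [hsdef, ← Real.rpow_add hT]
    norm_num [Real.rpow_neg_one]
  have hs3' : T ^ ((-(1 / 2) : ℝ) - 1) = s * s * s := by
    rw [hsdef, ← Real.rpow_add hT, ← Real.rpow_add hT]
    norm_num
  have hs4 : (T ^ 2)⁻¹ = s * s * (s * s) := by
    rw [hs2, ← mul_inv, ← sq]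
  -- the open set and differentiability of u
  have hΩ : IsOpen {p : ℝ × ℝ | 0 < p.2} := isOpen_Ioi.preimage continuous_snd
  have hP : ((-ρ * s, s) : ℝ × ℝ) ∈ {p : ℝ × ℝ | 0 < p.2} := hs
  have hfd : HasFDerivAt (fun p : ℝ × ℝ => u p.1 p.2)
      (fderiv ℝ (fun p : ℝ × ℝ => u p.1 p.2) (-ρ * s, s)) (-ρ * s, s) :=
    (((hu_smooth.contDiffAt (hΩ.mem_nhds hP)).differentiableAt (by simp))).hasFDerivAt
  set L := fderiv ℝ (fun p : ℝ × ℝ => u p.1 p.2) (-ρ * s, s) with hL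
  have hLlin : ∀ a b : ℝ, L (a, b) = a * L (1, 0) + b * L (0, 1) := by
    intro a b
    have hab : ((a, b) : ℝ × ℝ) = a • ((1 : ℝ), (0 : ℝ)) + b • ((0 : ℝ), (1 : ℝ)) := by
      simp
    rw [hab, map_add, map_smul, map_smul, smul_eq_mul, smul_eq_mul]
  -- partial derivatives at the point (-ρ*s, s)
  have hx : HasDerivAt (fun y => u y s) (L (1, 0)) (-ρ * s) :=
    (hfd.comp_hasDerivAt (-ρ * s) ((hasDerivAt_id (-ρ * s)).prodMk (hasDerivAt_const _ s)) :)
  have ht : HasDerivAt (fun τ => u (-ρ * s) τ) (L (0, 1)) s :=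
    (hfd.comp_hasDerivAt s ((hasDerivAt_const _ (-ρ * s)).prodMk (hasDerivAt_id s)) :)
  -- smoothness of the slice and its derivatives
  have hg : ContDiff ℝ (⊤ : ℕ∞) (fun y : ℝ => u y s) := by
    rw [← contDiffOn_univ]
    exact hu_smooth.comp ((contDiff_id.prodMk contDiff_const).contDiffOn) (fun y _ => hs)
  have hg' : ContDiff ℝ (⊤ : ℕ∞) (fun y : ℝ => u y s) := hg.of_le (by simp)
  have hg1 : ContDiff ℝ (⊤ : ℕ∞) (deriv (fun y : ℝ => u y s)) :=
    (contDiff_infty_iff_deriv.mp hg').2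
  have hg2 : ContDiff ℝ (⊤ : ℕ∞) (deriv (deriv (fun y : ℝ => u y s))) :=
    (contDiff_infty_iff_deriv.mp hg1).2
  have hiter : ∀ G : ℝ → ℝ, iteratedDeriv 3 G = deriv (deriv (deriv G)) := by
    intro G
    rw [show (3 : ℕ) = 2 + 1 from rfl, iteratedDeriv_succ,
      show (2 : ℕ) = 1 + 1 from rfl, iteratedDeriv_succ, iteratedDeriv_one]
  -- the chain rule helper for r ↦ G(-r*s)
  have hchain : ∀ (G : ℝ → ℝ), ContDiff ℝ (⊤ : ℕ∞) G → ∀ r : ℝ,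
      HasDerivAt (fun r' => G (-r' * s)) (deriv G (-r * s) * (-1 * s)) r := by
    intro G hG r
    exact ((hG.differentiable (by simp) (-r * s)).hasDerivAt).comp r
      (((hasDerivAt_id r).neg).mul_const s)
  -- ρ-derivatives of U
  have e0 : (fun r => U r T) = fun r => T⁻¹ * u (-r * s) s + 1 / 2 * r * T⁻¹ := by
    funext r
    rw [hU r T hT, ← hsdef]
  have D1 : ∀ r : ℝ, HasDerivAt (fun r' => T⁻¹ * u (-r' * s) s + 1 / 2 * r' * T⁻¹)
      (T⁻¹ * (deriv (fun y => u y s) (-r * s) * (-1 * s)) + 1 / 2 * 1 * T⁻¹) r := by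
    intro r
    exact ((hchain _ hg' r).const_mul T⁻¹).add
      (((hasDerivAt_id r).const_mul (1 / 2)).mul_const T⁻¹)
  have e1 : deriv (fun r' => T⁻¹ * u (-r' * s) s + 1 / 2 * r' * T⁻¹)
      = fun r => T⁻¹ * (deriv (fun y => u y s) (-r * s) * (-1 * s)) + 1 / 2 * 1 * T⁻¹ :=
    funext fun r => (D1 r).deriv
  have D2 : ∀ r : ℝ, HasDerivAt
      (fun r' => T⁻¹ * (deriv (fun y => u y s) (-r' * s) * (-1 * s)) + 1 / 2 * 1 * T⁻¹)
      (T⁻¹ * (deriv (deriv (fun y => u y s)) (-r * s) * (-1 * s) * (-1 * s))) r := by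
    intro r
    exact (((hchain _ hg1 r).mul_const (-1 * s)).const_mul T⁻¹).add_const (1 / 2 * 1 * T⁻¹)
  have e2 : deriv
      (fun r' => T⁻¹ * (deriv (fun y => u y s) (-r' * s) * (-1 * s)) + 1 / 2 * 1 * T⁻¹)
      = fun r => T⁻¹ * (deriv (deriv (fun y => u y s)) (-r * s) * (-1 * s) * (-1 * s)) :=
    funext fun r => (D2 r).deriv
  have D3 : HasDerivAt
      (fun r => T⁻¹ * (deriv (deriv (fun y => u y s)) (-r * s) * (-1 * s) * (-1 * s)))
      (T⁻¹ * (deriv (deriv (deriv (fun y => u y s))) (-ρ * s) * (-1 * s) * (-1 * s) * (-1 * s)))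
      ρ := by
    exact (((hchain _ hg2 ρ).mul_const (-1 * s)).mul_const (-1 * s)).const_mul T⁻¹
  -- T-derivative of U
  have hr : HasDerivAt (fun S : ℝ => S ^ (-(1 / 2) : ℝ))
      (-(1 / 2) * T ^ ((-(1 / 2) : ℝ) - 1)) T :=
    Real.hasDerivAt_rpow_const (Or.inl hT')
  have hγ : HasDerivAt
      (fun S : ℝ => ((-ρ * S ^ (-(1 / 2) : ℝ), S ^ (-(1 / 2) : ℝ)) : ℝ × ℝ))
      ((-ρ * (-(1 / 2) * T ^ ((-(1 / 2) : ℝ) - 1)), -(1 / 2) * T ^ ((-(1 / 2) : ℝ) - 1))) T :=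
    (hr.const_mul (-ρ)).prodMk hr
  have hfd' : HasFDerivAt (fun p : ℝ × ℝ => u p.1 p.2) L
      ((-ρ * T ^ (-(1 / 2) : ℝ), T ^ (-(1 / 2) : ℝ)) : ℝ × ℝ) := by
    rw [← hsdef]; exact hfd
  have hcomp : HasDerivAt (fun S : ℝ => u (-ρ * S ^ (-(1 / 2) : ℝ)) (S ^ (-(1 / 2) : ℝ)))
      (L ((-ρ * (-(1 / 2) * T ^ ((-(1 / 2) : ℝ) - 1)), -(1 / 2) * T ^ ((-(1 / 2) : ℝ) - 1)))) T :=
    (hfd'.comp_hasDerivAt T hγ :)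
  have hφ : HasDerivAt
      (fun S : ℝ => S⁻¹ * u (-ρ * S ^ (-(1 / 2) : ℝ)) (S ^ (-(1 / 2) : ℝ)) + 1 / 2 * ρ * S⁻¹)
      (-(T ^ 2)⁻¹ * u (-ρ * T ^ (-(1 / 2) : ℝ)) (T ^ (-(1 / 2) : ℝ))
        + T⁻¹ * L ((-ρ * (-(1 / 2) * T ^ ((-(1 / 2) : ℝ) - 1)),
            -(1 / 2) * T ^ ((-(1 / 2) : ℝ) - 1)))
        + 1 / 2 * ρ * -(T ^ 2)⁻¹) T :=
    ((hasDerivAt_inv hT').mul hcomp).add ((hasDerivAt_inv hT').const_mul (1 / 2 * ρ))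
  have eT : deriv (fun S => U ρ S) T =
      -(T ^ 2)⁻¹ * u (-ρ * T ^ (-(1 / 2) : ℝ)) (T ^ (-(1 / 2) : ℝ))
        + T⁻¹ * L ((-ρ * (-(1 / 2) * T ^ ((-(1 / 2) : ℝ) - 1)),
            -(1 / 2) * T ^ ((-(1 / 2) : ℝ) - 1)))
        + 1 / 2 * ρ * -(T ^ 2)⁻¹ := by
    have hEq : (fun S => U ρ S) =ᶠ[nhds T]
        (fun S : ℝ => S⁻¹ * u (-ρ * S ^ (-(1 / 2) : ℝ)) (S ^ (-(1 / 2) : ℝ))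
          + 1 / 2 * ρ * S⁻¹) := by
      filter_upwards [isOpen_Ioi.mem_nhds hT] with S hS
      exact hU ρ S hS
    rw [hEq.deriv_eq]
    exact hφ.deriv
  -- the KdV equation at the point
  have hKdVp := hKdV (-ρ * s) s hs
  rw [hiter, ht.deriv, hx.deriv] at hKdVp
  -- assemble
  rw [e0, hiter, e1, e2, D3.deriv, eT, hU ρ T hT, ← hsdef, hs3', hs4]
  rw [hLlin]
  beta_reduce
  rw [hx.deriv]
  have hdiv : ∀ X : ℝ, X / (2 * T) = X * (s * s) / 2 := by
    intro X
    rw [hs2]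
    field_simp
  rw [hdiv, ← hs2]
  linear_combination (-(s * s * s * s * s) / 2) * hKdVp
end

section
/- Let y : ℝ → ℝ be twice differentiable and satisfy the Painlevé II equation y''(x) = x·y(x) + 2·y(x)³ for all x ∈ ℝ. Then the function u(x,t) := x/(2t) − t^{-2/3}·y(−x t^{-1/3})², defined for x ∈ ℝ and t > 0, solves the KdV equation ∂_t u + 2 u ∂_x u + (1/6) ∂_x³ u = 0 at every point of ℝ × (0,∞). -/
/-!
Writing `b = t^{-1/3}`, the function is `u = x b³/2 − b² v(−x b)` with `v = y²`. Since
`∂_t b = −b⁴/3` and `x b = −z` for `z = −x b`, the KdV expression becomes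
`b⁵ (v''' − 2v − 4z v' − 12 v v')/6` evaluated at `z`, and this bracket vanishes for the
square of every Painlevé II solution: differentiating `v = y²` three times and eliminating `y''`
with the equation gives `v''' = 2y² + 8z y y' + 24 y³ y'`.
-/

open Real
open scoped ContDiff

section PainleveII

variable {y : ℝ → ℝ}

theorem contDiff_of_painleveII (hy1 : Differentiable ℝ y) (hy2 : Differentiable ℝ (deriv y))
    (hPII : ∀ x, deriv (deriv y) x = x * y x + 2 * y x ^ 3) : ContDiff ℝ ∞ y := by
  have step : ∀ n : ℕ, ContDiff ℝ n y → ContDiff ℝ (n + 2) y := fun n hn => by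
    have hy'' : ContDiff ℝ n (deriv (deriv y)) := by
      rw [funext hPII]
      exact (contDiff_id.mul hn).add (contDiff_const.mul (hn.pow 3))
    exact contDiff_succ_iff_deriv.2
      ⟨hy1, by simp, contDiff_succ_iff_deriv.2 ⟨hy2, by simp, hy''⟩⟩
  have hconsec : ∀ n : ℕ, ContDiff ℝ n y ∧ ContDiff ℝ (n + 1) y := by
    intro n
    induction n with
    | zero =>
      exact ⟨contDiff_zero.2 hy1.continuous, contDiff_one_iff_deriv.2 ⟨hy1, hy2.continuous⟩⟩
    | succ n ih => exact ⟨by exact_mod_cast ih.2, by exact_mod_cast step n ih.1⟩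
  exact contDiff_infty.2 fun n => (hconsec n).1

theorem iteratedDeriv_three_sq_of_painleveII (hy1 : Differentiable ℝ y)
    (hy2 : Differentiable ℝ (deriv y)) (hPII : ∀ x, deriv (deriv y) x = x * y x + 2 * y x ^ 3)
    (z : ℝ) :
    iteratedDeriv 3 (fun z => y z ^ 2) z = 2 * y z ^ 2 + 4 * z * deriv (fun z => y z ^ 2) z
      + 12 * y z ^ 2 * deriv (fun z => y z ^ 2) z := by
  have hy' : ∀ x, HasDerivAt y (deriv y x) x := fun x => (hy1 x).hasDerivAt
  have hy'' : ∀ x, HasDerivAt (deriv y) (x * y x + 2 * y x ^ 3) x := fun x =>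
    hPII x ▸ (hy2 x).hasDerivAt
  have hv' : deriv (fun z => y z ^ 2) = fun x => 2 * y x * deriv y x := funext fun x =>
    ((hy' x).pow 2).deriv.trans (by ring)
  have hv'' : deriv (deriv (fun z => y z ^ 2))
      = fun x => 2 * deriv y x ^ 2 + 2 * x * y x ^ 2 + 4 * y x ^ 4 := by
    rw [hv']
    exact funext fun x => (((hy' x).const_mul 2).mul (hy'' x)).deriv.trans (by ring)
  have hv''' : HasDerivAt (deriv (deriv (fun z => y z ^ 2)))
      (4 * deriv y z * (z * y z + 2 * y z ^ 3) + 2 * y z ^ 2 + 4 * z * y z * deriv y z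
        + 16 * y z ^ 3 * deriv y z) z := by
    rw [hv'']
    exact (((((hy'' z).fun_pow 2).const_mul 2).add
      (((hasDerivAt_id z).const_mul 2).fun_mul ((hy' z).fun_pow 2))).add
      (((hy' z).fun_pow 4).const_mul 4)).congr_deriv (by simp only [id]; push_cast; ring)
  rw [iteratedDeriv_eq_iterate, hv']
  exact hv'''.deriv.trans (by ring)

end PainleveII

theorem rpow_neg_one_third_pow {t : ℝ} (ht : 0 ≤ t) (n : ℕ) :
    (t ^ (-(1 / 3) : ℝ)) ^ n = t ^ (-(n / 3) : ℝ) := by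
  rw [← rpow_natCast, ← rpow_mul ht]
  ring_nf

theorem hasDerivAt_rpow_neg_one_third {t : ℝ} (ht : 0 < t) :
    HasDerivAt (fun s : ℝ => s ^ (-(1 / 3) : ℝ)) (-(1 / 3) * (t ^ (-(1 / 3) : ℝ)) ^ 4) t := by
  convert hasDerivAt_rpow_const (p := -(1 / 3)) (Or.inl ht.ne') using 2
  rw [rpow_neg_one_third_pow ht.le]
  norm_num

/-- The similarity ansatz for KdV in the variable `b = t^{-1/3}`, which keeps all powers
integral. -/
noncomputable def kdvSelfSimilar (v : ℝ → ℝ) (x b : ℝ) : ℝ :=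
  x * b ^ 3 / 2 - b ^ 2 * v (-x * b)

section SelfSimilar

variable {v : ℝ → ℝ}

theorem hasDerivAt_kdvSelfSimilar_space (hv : Differentiable ℝ v) (x b : ℝ) :
    HasDerivAt (fun x => kdvSelfSimilar v x b) (b ^ 3 / 2 + b ^ 3 * deriv v (-x * b)) x := by
  have hz : HasDerivAt (fun x : ℝ => -x * b) (-b) x := by
    simpa using ((hasDerivAt_id x).neg).mul_const b
  exact ((((hasDerivAt_id x).mul_const (b ^ 3)).div_const 2).sub
    (((hv _).hasDerivAt.comp x hz).const_mul (b ^ 2))).congr_deriv (by ring)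

theorem hasDerivAt_kdvSelfSimilar_scale (hv : Differentiable ℝ v) (x b : ℝ) :
    HasDerivAt (kdvSelfSimilar v x)
      (3 * x * b ^ 2 / 2 - 2 * b * v (-x * b) + x * b ^ 2 * deriv v (-x * b)) b := by
  have hz : HasDerivAt (fun b : ℝ => -x * b) (-x) b := by
    simpa using (hasDerivAt_id b).const_mul (-x)
  exact ((((hasDerivAt_id b).fun_pow 3).const_mul x).div_const 2 |>.sub
    (((hasDerivAt_id b).fun_pow 2).fun_mul ((hv _).hasDerivAt.comp b hz))).congr_deriv
    (by simp only [id, Function.comp_apply]; push_cast; ring)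

theorem iteratedDeriv_three_kdvSelfSimilar_space (hv : ContDiff ℝ 3 v) (x b : ℝ) :
    iteratedDeriv 3 (fun x => kdvSelfSimilar v x b) x = b ^ 5 * iteratedDeriv 3 v (-x * b) := by
  have hlin : ContDiff ℝ 3 (fun x : ℝ => x * b ^ 3 / 2) := by fun_prop
  have hcomp : ContDiff ℝ 3 (fun x : ℝ => b ^ 2 * v (-x * b)) :=
    contDiff_const.mul (hv.comp (by fun_prop))
  have hscale : (fun x => v (-x * b)) = fun x => v (-b * x) := by
    ext x
    ring_nf
  simp only [kdvSelfSimilar]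
  rw [iteratedDeriv_fun_sub hlin.contDiffAt hcomp.contDiffAt, iteratedDeriv_div_const,
    iteratedDeriv_mul_const_field, iteratedDeriv_fun_id, iteratedDeriv_const_mul_field, hscale,
    iteratedDeriv_comp_const_mul hv]
  norm_num
  ring_nf

theorem kdv_of_kdvSelfSimilar (hv : ContDiff ℝ 3 v)
    (hode : ∀ z, iteratedDeriv 3 v z = 2 * v z + 4 * z * deriv v z + 12 * v z * deriv v z)
    {u : ℝ → ℝ → ℝ} (hu : ∀ x t : ℝ, 0 < t → u x t = kdvSelfSimilar v x (t ^ (-(1 / 3) : ℝ)))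
    {x t : ℝ} (ht : 0 < t) :
    deriv (fun s => u x s) t + 2 * u x t * deriv (fun x' => u x' t) x
      + (1 / 6) * iteratedDeriv 3 (fun x' => u x' t) x = 0 := by
  have hv1 : Differentiable ℝ v := hv.differentiable (by norm_num)
  set b := t ^ (-(1 / 3) : ℝ)
  have hspace : (fun x' => u x' t) = fun x' => kdvSelfSimilar v x' b :=
    funext fun x' => hu x' t ht
  have htime : (fun s => u x s) =ᶠ[nhds t] fun s => kdvSelfSimilar v x (s ^ (-(1 / 3) : ℝ)) :=
    eventually_gt_nhds ht |>.mono fun s hs => hu x s hs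
  have hderiv_time : HasDerivAt (fun s => kdvSelfSimilar v x (s ^ (-(1 / 3) : ℝ)))
      ((3 * x * b ^ 2 / 2 - 2 * b * v (-x * b) + x * b ^ 2 * deriv v (-x * b))
        * (-(1 / 3) * b ^ 4)) t :=
    (hasDerivAt_kdvSelfSimilar_scale hv1 x b).comp (h := fun s : ℝ => s ^ (-(1 / 3) : ℝ)) t
      (hasDerivAt_rpow_neg_one_third ht)
  rw [htime.deriv_eq, hderiv_time.deriv, hspace, (hasDerivAt_kdvSelfSimilar_space hv1 x b).deriv,
    iteratedDeriv_three_kdvSelfSimilar_space hv, hode, hu x t ht, kdvSelfSimilar]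
  ring

end SelfSimilar

/-- If `y` is twice differentiable and satisfies the Painlevé II equation
`y'' = x·y + 2·y³` on `ℝ`, then `u(x,t) := x/(2t) − t^{-2/3}·y(−x t^{-1/3})²` solves the KdV
equation `∂_t u + 2 u ∂_x u + (1/6) ∂_x³ u = 0` on `ℝ × (0,∞)`. -/
theorem stmt_1 (y : ℝ → ℝ)
    (hy1 : Differentiable ℝ y) (hy2 : Differentiable ℝ (deriv y))
    (hPII : ∀ x : ℝ, deriv (deriv y) x = x * y x + 2 * (y x) ^ 3)
    (u : ℝ → ℝ → ℝ)
    (hu : ∀ x t : ℝ, 0 < t →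
      u x t = x / (2 * t) - t ^ (-(2 / 3) : ℝ) * (y (-x * t ^ (-(1 / 3) : ℝ))) ^ 2) :
    ∀ x t : ℝ, 0 < t →
      deriv (fun s => u x s) t + 2 * u x t * deriv (fun x' => u x' t) x
        + (1 / 6) * iteratedDeriv 3 (fun x' => u x' t) x = 0 := by
  have hsq : ContDiff ℝ 3 (fun z => y z ^ 2) :=
    (contDiff_infty.1 (contDiff_of_painleveII hy1 hy2 hPII) 3).pow 2
  have hself : ∀ x t : ℝ, 0 < t →
      u x t = kdvSelfSimilar (fun z => y z ^ 2) x (t ^ (-(1 / 3) : ℝ)) := by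
    intro x t ht
    have hb3 : (t ^ (-(1 / 3) : ℝ)) ^ 3 = t⁻¹ := by
      rw [rpow_neg_one_third_pow ht.le, ← rpow_neg_one]
      norm_num
    have hb2 : (t ^ (-(1 / 3) : ℝ)) ^ 2 = t ^ (-(2 / 3) : ℝ) := by
      rw [rpow_neg_one_third_pow ht.le]
      norm_num
    rw [hu x t ht, kdvSelfSimilar, hb3, hb2]
    ring
  exact fun x t ht =>
    kdv_of_kdvSelfSimilar hsq (iteratedDeriv_three_sq_of_painleveII hy1 hy2 hPII) hself ht
end

section
/- Let p, q : ℝ → ℝ be functions with p differentiable and satisfying p'(x) = −2q(x) − p(x)² for all x ∈ ℝ, and set u(x) := p'(x). Define the 2×2 complex matrices B̃(z;x) := [[p(x), i z + 2 i q(x)], [−i, −p(x)]], R(x) := e^{iπσ₃/4} · [[1, −i p(x)], [0, 1]], and B(z;x) := [[0, −z + 2u(x)], [−1, 0]]. Then for every x ∈ ℝ and every z ∈ ℂ, R(x) B̃(z;x) R(x)^{-1} + R'(x) R(x)^{-1} = B(z;x), where R'(x) is the entrywise derivative of R. -/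
/-!
Since `e^{-iπ/4} = -i e^{iπ/4}`, the matrix `R(x)` is the scalar `e^{iπ/4}` times
`N(p(x)) = [[1, -i p], [0, -i]]`, and the scalar cancels from the gauge transformation.
Multiplying out, `R B̃ + R' = B R` reduces entrywise to the Riccati equation `p' = -2q - p²`.
-/

open Matrix

/-- `R(x) = e^{iπσ₃/4}·[[1, −i p(x)],[0, 1]]`, where `e^{iπσ₃/4} = diag(e^{iπ/4}, e^{−iπ/4})`. -/
noncomputable def Rmat (p : ℝ → ℝ) (x : ℝ) : Matrix (Fin 2) (Fin 2) ℂ :=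
  !![Complex.exp (Real.pi * Complex.I / 4), 0; 0, Complex.exp (-(Real.pi * Complex.I / 4))] *
    !![1, -Complex.I * (p x : ℂ); 0, 1]

open Complex

lemma Complex.exp_pi_mul_I_div_four_sq : exp (Real.pi * I / 4) ^ 2 = I := by
  rw [← exp_nat_mul]
  convert exp_pi_div_two_mul_I using 2
  push_cast
  ring

lemma Complex.exp_neg_pi_mul_I_div_four :
    exp (-(Real.pi * I / 4)) = -I * exp (Real.pi * I / 4) := by
  rw [exp_neg, inv_eq_of_mul_eq_one_right]
  linear_combination (-I) * exp_pi_mul_I_div_four_sq - I_mul_I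

lemma Complex.deriv_ofReal_comp (f : ℝ → ℝ) (x : ℝ) :
    deriv (fun y => (f y : ℂ)) x = deriv f x := by
  by_cases hf : DifferentiableAt ℝ f x
  · exact hf.hasDerivAt.ofReal_comp.deriv
  · have hf' : ¬DifferentiableAt ℝ (fun y => (f y : ℂ)) x := fun h =>
      hf (reCLM.differentiableAt.comp x h)
    rw [deriv_zero_of_not_differentiableAt hf, deriv_zero_of_not_differentiableAt hf', ofReal_zero]

lemma Matrix.mul_mul_nonsing_inv_add_mul_nonsing_inv_eq_iff {n α : Type*} [Fintype n]
    [DecidableEq n] [CommRing α] {R A R' B : Matrix n n α} (hR : IsUnit R.det) :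
    R * A * R⁻¹ + R' * R⁻¹ = B ↔ R * A + R' = B * R := by
  rw [← add_mul]
  constructor
  · rintro rfl
    exact (nonsing_inv_mul_cancel_right R _ hR).symm
  · intro h
    rw [h, mul_nonsing_inv_cancel_right R _ hR]

noncomputable abbrev gaugeMat (a : ℂ) : Matrix (Fin 2) (Fin 2) ℂ := !![1, -I * a; 0, -I]

lemma Rmat_eq_smul (p : ℝ → ℝ) (x : ℝ) :
    Rmat p x = exp (Real.pi * I / 4) • gaugeMat (p x) := by
  rw [Rmat, exp_neg_pi_mul_I_div_four, mul_fin_two]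
  ext i j
  fin_cases i <;> fin_cases j <;> simp [mul_comm]

lemma det_Rmat (p : ℝ → ℝ) (x : ℝ) : (Rmat p x).det = 1 := by
  rw [Rmat_eq_smul, det_smul, det_fin_two_of, Fintype.card_fin, exp_pi_mul_I_div_four_sq]
  linear_combination -I_mul_I

lemma deriv_Rmat (p : ℝ → ℝ) (x : ℝ) :
    (Matrix.of fun i j => deriv (fun y => Rmat p y i j) x)
      = exp (Real.pi * I / 4) • !![0, -I * ((deriv p x : ℝ) : ℂ); 0, 0] := by
  simp_rw [Rmat_eq_smul]
  ext i j
  fin_cases i <;> fin_cases j <;>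
    simp [← mul_assoc, deriv_const_mul_field, deriv_ofReal_comp]

lemma gaugeMat_mul_add_deriv (p q u z : ℂ) (hu : u = -2 * q - p ^ 2) :
    gaugeMat p * !![p, I * z + 2 * I * q; -I, -p] + !![0, -I * u; 0, 0]
      = !![0, -z + 2 * u; -1, 0] * gaugeMat p := by
  ext i j
  fin_cases i <;> fin_cases j <;> simp <;> grind [I_mul_I]

theorem stmt_4_general (p q : ℝ → ℝ)
    (hpq : ∀ x : ℝ, deriv p x = -2 * q x - (p x) ^ 2) :
    ∀ (x : ℝ) (z : ℂ),
      Rmat p x * !![(p x : ℂ), Complex.I * z + 2 * Complex.I * (q x : ℂ);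
                    -Complex.I, -(p x : ℂ)] * (Rmat p x)⁻¹
        + (Matrix.of fun i j => deriv (fun y => Rmat p y i j) x) * (Rmat p x)⁻¹
        = !![0, -z + 2 * ((deriv p x : ℝ) : ℂ); -1, 0] := by
  intro x z
  rw [mul_mul_nonsing_inv_add_mul_nonsing_inv_eq_iff (by simp [det_Rmat]), deriv_Rmat,
    Rmat_eq_smul, Matrix.smul_mul, Matrix.mul_smul, ← smul_add,
    gaugeMat_mul_add_deriv _ _ _ z (by exact_mod_cast hpq x)]

/-- If `p` is differentiable with `p' = −2q − p²` and `u := p'`, then for the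
matrices `B̃(z;x) = [[p, iz + 2iq],[−i, −p]]` and `B(z;x) = [[0, −z + 2u],[−1, 0]]` one has
`R B̃ R⁻¹ + R' R⁻¹ = B`, where `R(x) = e^{iπσ₃/4}·[[1, −i p(x)],[0, 1]]` and `R'` is the
entrywise derivative. -/
theorem stmt_4 (p q : ℝ → ℝ) (hp : Differentiable ℝ p)
    (hpq : ∀ x : ℝ, deriv p x = -2 * q x - (p x) ^ 2) :
    ∀ (x : ℝ) (z : ℂ),
      Rmat p x * !![(p x : ℂ), Complex.I * z + 2 * Complex.I * (q x : ℂ);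
                    -Complex.I, -(p x : ℂ)] * (Rmat p x)⁻¹
        + (Matrix.of fun i j => deriv (fun y => Rmat p y i j) x) * (Rmat p x)⁻¹
        = !![0, -z + 2 * ((deriv p x : ℝ) : ℂ); -1, 0] :=
  stmt_4_general p q hpq
end

section
/- Let σ : ℝ → ℝ be nondecreasing, bounded and right-continuous, with associated Lebesgue–Stieltjes measure μ_σ. Let φ̂ : ℝ × ℝ × (0,∞) → ℝ (written φ̂(z; t₁, t₃)) be such that for each z the map (t₁,t₃) ↦ φ̂(z;t₁,t₃) is C³ in t₁ and C¹ in t₃, and for each (t₁,t₃) the functions r ↦ φ̂(r;t₁,t₃)² and r ↦ φ̂(r;t₁,t₃)·∂_{t₁}φ̂(r;t₁,t₃) are μ_σ-integrable. Define φ(z;x,t) := t^{-1/2}·φ̂(z; −x/t, 1/(3t²)) for z ∈ ℝ, x ∈ ℝ, t > 0, and suppose that for all z, x, t: −∂_t φ(z;x,t) = (2/3)∂_x³φ(z;x,t) + φ(z;x,t)/(2t) + (x/t)·∂_xφ(z;x,t) − (2/t)·φ(z;x,t)·∫_ℝ φ(r;x,t)·∂_xφ(r;x,t) dμ_σ(r)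 − (2/t)·∂_xφ(z;x,t)·∫_ℝ φ(r;x,t)² dμ_σ(r). Then φ̂ satisfies the integro-differential modified KdV equation: for all z, t₁ ∈ ℝ and t₃ > 0, ∂_{t₃}φ̂(z;t₁,t₃) = −∂_{t₁}³φ̂(z;t₁,t₃) + 3·∂_{t₁}φ̂(z;t₁,t₃)·∫_ℝ φ̂(r;t₁,t₃)² dμ_σ(r) + 3·φ̂(z;t₁,t₃)·∫_ℝ φ̂(r;t₁,t₃)·∂_{t₁}φ̂(r;t₁,t₃) dμ_σ(r). -/
/-!
Substitute the ansatz into the equation for `φ` at the point `(x, t)` with `-x/t = t₁` and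
`1/(3t²) = t₃`. Every `x`-derivative contributes a factor `-1/t`, the integrals pick up the
factors `t⁻¹` and `-t⁻²`, and by the chain rule `∂_t` splits into the `t₁`- and `t₃`-partials
with weights `x/t²` and `-2/(3t³)`. The term `φ/(2t)` cancels the derivative of the prefactor
`t^{-1/2}`, and `(x/t)∂_xφ` cancels the `t₁`-part of the chain rule; what is left is the mKdV
equation multiplied by `2 t^{-1/2}/(3t³)`.
-/

open MeasureTheory

theorem hasDerivAt_comp₂_of_differentiableAt {ψ : ℝ → ℝ → ℝ} {u v : ℝ → ℝ} {u' v' t : ℝ}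
    (hψ : DifferentiableAt ℝ (fun p : ℝ × ℝ => ψ p.1 p.2) (u t, v t))
    (hu : HasDerivAt u u' t) (hv : HasDerivAt v v' t) :
    HasDerivAt (fun s => ψ (u s) (v s))
      (u' * deriv (fun a => ψ a (v t)) (u t) + v' * deriv (ψ (u t)) (v t)) t := by
  set L := fderiv ℝ (fun p : ℝ × ℝ => ψ p.1 p.2) (u t, v t)
  have hL : HasFDerivAt (fun p : ℝ × ℝ => ψ p.1 p.2) L (u t, v t) := hψ.hasFDerivAt
  have hL₁ : deriv (fun a => ψ a (v t)) (u t) = L (1, 0) := by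
    have h := hL.comp_hasDerivAt (u t) ((hasDerivAt_id (u t)).prodMk (hasDerivAt_const (u t) (v t)))
    exact h.deriv
  have hL₂ : deriv (ψ (u t)) (v t) = L (0, 1) := by
    have h := hL.comp_hasDerivAt (v t) ((hasDerivAt_const (v t) (u t)).prodMk (hasDerivAt_id (v t)))
    exact h.deriv
  have hsplit : L (u', v') = u' * L (1, 0) + v' * L (0, 1) := by
    rw [← smul_eq_mul, ← smul_eq_mul, ← L.map_smul, ← L.map_smul, ← L.map_add]
    simp
  rw [hL₁, hL₂, ← hsplit]
  exact hL.comp_hasDerivAt t (hu.prodMk hv)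

theorem exists_pos_one_div_three_mul_sq_eq {t₃ : ℝ} (ht₃ : 0 < t₃) :
    ∃ t : ℝ, 0 < t ∧ 1 / (3 * t ^ 2) = t₃ := by
  refine ⟨(Real.sqrt (3 * t₃))⁻¹, by positivity, ?_⟩
  rw [inv_pow, Real.sq_sqrt (by positivity)]
  field_simp

theorem rpow_neg_half_sq {t : ℝ} (ht : 0 ≤ t) : (t ^ (-(1 / 2) : ℝ)) ^ 2 = t⁻¹ := by
  rw [← Real.rpow_natCast, ← Real.rpow_mul ht]
  norm_num [Real.rpow_neg_one]

theorem hasDerivAt_rpow_neg_half {t : ℝ} (ht : 0 < t) :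
    HasDerivAt (fun s : ℝ => s ^ (-(1 / 2) : ℝ)) (-(1 / 2) * t ^ (-(1 / 2) : ℝ) / t) t := by
  convert Real.hasDerivAt_rpow_const (p := -(1 / 2)) (Or.inl ht.ne') using 1
  rw [Real.rpow_sub ht, Real.rpow_one, mul_div_assoc]

theorem hasDerivAt_neg_div (x : ℝ) {t : ℝ} (ht : t ≠ 0) :
    HasDerivAt (fun s : ℝ => -x / s) (x / t ^ 2) t := by
  simp only [div_eq_mul_inv]
  exact ((hasDerivAt_inv ht).const_mul (-x)).congr_deriv (by ring)

theorem hasDerivAt_one_div_three_mul_sq {t : ℝ} (ht : t ≠ 0) :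
    HasDerivAt (fun s : ℝ => 1 / (3 * s ^ 2)) (-2 / (3 * t ^ 3)) t := by
  simp only [one_div]
  exact (((hasDerivAt_pow 2 t).const_mul 3).inv (by positivity)).congr_deriv
    (by field_simp; ring)

def IsSimilarityTransform (φ φhat : ℝ → ℝ → ℝ → ℝ) : Prop :=
  ∀ z x t : ℝ, 0 < t → φ z x t = t ^ (-(1 / 2) : ℝ) * φhat z (-x / t) (1 / (3 * t ^ 2))

namespace IsSimilarityTransform

variable {φhat φ : ℝ → ℝ → ℝ → ℝ} {t : ℝ}

theorem fun_space_eq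
    (hφ : IsSimilarityTransform φ φhat) (ht : 0 < t) (w : ℝ) :
    (fun y => φ w y t) = fun y => t ^ (-(1 / 2) : ℝ) * φhat w (-t⁻¹ * y) (1 / (3 * t ^ 2)) := by
  ext y
  rw [hφ w y t ht, neg_mul, ← div_eq_inv_mul, neg_div]

theorem deriv_space
    (hφ : IsSimilarityTransform φ φhat) (ht : 0 < t) (w x : ℝ) :
    deriv (fun y => φ w y t) x = t ^ (-(1 / 2) : ℝ) * -t⁻¹ *
      deriv (fun y => φhat w y (1 / (3 * t ^ 2))) (-x / t) := by
  have hx : -t⁻¹ * x = -x / t := by ring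
  rw [hφ.fun_space_eq ht, deriv_const_mul_field,
    deriv_comp_mul_left (-t⁻¹) (fun y => φhat w y (1 / (3 * t ^ 2))), smul_eq_mul, hx, mul_assoc]

theorem iteratedDeriv_space
    (hφ : IsSimilarityTransform φ φhat) (ht : 0 < t) (w x : ℝ) {n : ℕ}
    (hn : ContDiff ℝ n fun y => φhat w y (1 / (3 * t ^ 2))) :
    iteratedDeriv n (fun y => φ w y t) x = t ^ (-(1 / 2) : ℝ) * (-t⁻¹) ^ n *
      iteratedDeriv n (fun y => φhat w y (1 / (3 * t ^ 2))) (-x / t) := by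
  have hx : -t⁻¹ * x = -x / t := by ring
  rw [hφ.fun_space_eq ht, iteratedDeriv_const_mul_field,
    iteratedDeriv_comp_const_mul hn]
  beta_reduce
  rw [hx, mul_assoc]

theorem deriv_time
    (hφ : IsSimilarityTransform φ φhat) (ht : 0 < t) (z x : ℝ)
    (hd : DifferentiableAt ℝ (fun p : ℝ × ℝ => φhat z p.1 p.2) (-x / t, 1 / (3 * t ^ 2))) :
    deriv (fun s => φ z x s) t
      = -(1 / 2) * t ^ (-(1 / 2) : ℝ) / t * φhat z (-x / t) (1 / (3 * t ^ 2))
        + t ^ (-(1 / 2) : ℝ) *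
          (x / t ^ 2 * deriv (fun y => φhat z y (1 / (3 * t ^ 2))) (-x / t)
            + -2 / (3 * t ^ 3) * deriv (fun s => φhat z (-x / t) s) (1 / (3 * t ^ 2))) := by
  have hφ_near : (fun s => φ z x s) =ᶠ[nhds t]
      fun s => s ^ (-(1 / 2) : ℝ) * φhat z (-x / s) (1 / (3 * s ^ 2)) := by
    filter_upwards [isOpen_Ioi.mem_nhds ht] with s hs using hφ z x s hs
  refine (HasDerivAt.congr_of_eventuallyEq ?_ hφ_near).deriv
  exact (hasDerivAt_rpow_neg_half ht).mul (hasDerivAt_comp₂_of_differentiableAt hd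
    (hasDerivAt_neg_div x ht.ne') (hasDerivAt_one_div_three_mul_sq ht.ne'))

theorem integral_sq
    (hφ : IsSimilarityTransform φ φhat) (ht : 0 < t) (x : ℝ) (μ : Measure ℝ) :
    ∫ r, φ r x t ^ 2 ∂μ = t⁻¹ * ∫ r, φhat r (-x / t) (1 / (3 * t ^ 2)) ^ 2 ∂μ := by
  rw [← integral_const_mul]
  congr 1 with r
  rw [hφ r x t ht, mul_pow, rpow_neg_half_sq ht.le]

theorem integral_mul_deriv_space
    (hφ : IsSimilarityTransform φ φhat) (ht : 0 < t) (x : ℝ) (μ : Measure ℝ) :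
    ∫ r, φ r x t * deriv (fun y => φ r y t) x ∂μ
      = -(t ^ 2)⁻¹ * ∫ r, φhat r (-x / t) (1 / (3 * t ^ 2)) *
          deriv (fun y => φhat r y (1 / (3 * t ^ 2))) (-x / t) ∂μ := by
  rw [← integral_const_mul]
  congr 1 with r
  rw [hφ r x t ht, hφ.deriv_space ht]
  linear_combination (-t⁻¹ * φhat r (-x / t) (1 / (3 * t ^ 2)) *
    deriv (fun y => φhat r y (1 / (3 * t ^ 2))) (-x / t)) * rpow_neg_half_sq ht.le

end IsSimilarityTransform

theorem stmt_7_general (f : StieltjesFunction ℝ)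
    (φhat : ℝ → ℝ → ℝ → ℝ)
    (hC3 : ∀ z t₃ : ℝ, 0 < t₃ → ContDiff ℝ 3 (fun t₁ => φhat z t₁ t₃))
    (hC1 : ∀ z : ℝ, ContDiffOn ℝ 1 (fun p : ℝ × ℝ => φhat z p.1 p.2)
      {p : ℝ × ℝ | 0 < p.2})
    (φ : ℝ → ℝ → ℝ → ℝ)
    (hφ : ∀ z x t : ℝ, 0 < t →
      φ z x t = t ^ (-(1 / 2) : ℝ) * φhat z (-x / t) (1 / (3 * t ^ 2)))
    (hPDE : ∀ z x t : ℝ, 0 < t →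
      -deriv (fun s => φ z x s) t
        = (2 / 3) * iteratedDeriv 3 (fun y => φ z y t) x + φ z x t / (2 * t)
          + (x / t) * deriv (fun y => φ z y t) x
          - (2 / t) * φ z x t * ∫ r, φ r x t * deriv (fun y => φ r y t) x ∂f.measure
          - (2 / t) * deriv (fun y => φ z y t) x * ∫ r, (φ r x t) ^ 2 ∂f.measure) :
    ∀ z t₁ t₃ : ℝ, 0 < t₃ →
      deriv (fun s => φhat z t₁ s) t₃
        = -iteratedDeriv 3 (fun y => φhat z y t₃) t₁
          + 3 * deriv (fun y => φhat z y t₃) t₁ * ∫ r, (φhat r t₁ t₃) ^ 2 ∂f.measure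
          + 3 * φhat z t₁ t₃ *
              ∫ r, φhat r t₁ t₃ * deriv (fun y => φhat r y t₃) t₁ ∂f.measure := by
  intro z t₁ t₃ ht₃
  obtain ⟨t, ht, rfl⟩ := exists_pos_one_div_three_mul_sq_eq ht₃
  obtain ⟨x, rfl⟩ : ∃ x, -x / t = t₁ := ⟨-t₁ * t, by field_simp⟩
  have hd : DifferentiableAt ℝ (fun p : ℝ × ℝ => φhat z p.1 p.2) (-x / t, 1 / (3 * t ^ 2)) :=
    ((hC1 z).differentiableOn one_ne_zero).differentiableAt
      ((isOpen_lt continuous_const continuous_snd).mem_nhds ht₃)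
  replace hφ : IsSimilarityTransform φ φhat := hφ
  have E := hPDE z x t ht
  rw [hφ.integral_mul_deriv_space ht, hφ.integral_sq ht, hφ.deriv_time ht z x hd,
    hφ.iteratedDeriv_space ht z x (hC3 z _ ht₃), hφ.deriv_space ht, hφ z x t ht] at E
  have hc : 2 * t ^ (-(1 / 2) : ℝ) / (3 * t ^ 3) ≠ 0 := by positivity
  apply mul_left_cancel₀ hc
  linear_combination E

/-- Let `σ` be nondecreasing, bounded and right-continuous (a Stieltjes
function) with Lebesgue–Stieltjes measure `μ_σ`. Let `φ̂(z;t₁,t₃)` be `C³` in `t₁`, `C¹` in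
`(t₁,t₃)` on `ℝ × (0,∞)`, with `μ_σ`-integrable squares and products, and define
`φ(z;x,t) := t^{-1/2}·φ̂(z;−x/t, 1/(3t²))`. If `φ` satisfies
`−∂_tφ = (2/3)∂_x³φ + φ/(2t) + (x/t)∂_xφ − (2/t)φ∫φ∂_xφ dμ_σ − (2/t)∂_xφ∫φ² dμ_σ`,
then `φ̂` satisfies the integro-differential mKdV equation
`∂_{t₃}φ̂ = −∂_{t₁}³φ̂ + 3∂_{t₁}φ̂·∫φ̂² dμ_σ + 3φ̂·∫φ̂ ∂_{t₁}φ̂ dμ_σ`. -/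
theorem stmt_7 (f : StieltjesFunction ℝ) (hbdd : ∃ M : ℝ, ∀ r : ℝ, |f r| ≤ M)
    (φhat : ℝ → ℝ → ℝ → ℝ)
    (hC3 : ∀ z t₃ : ℝ, 0 < t₃ → ContDiff ℝ 3 (fun t₁ => φhat z t₁ t₃))
    (hC1 : ∀ z : ℝ, ContDiffOn ℝ 1 (fun p : ℝ × ℝ => φhat z p.1 p.2)
      {p : ℝ × ℝ | 0 < p.2})
    (hInt1 : ∀ t₁ t₃ : ℝ, 0 < t₃ → Integrable (fun r => (φhat r t₁ t₃) ^ 2) f.measure)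
    (hInt2 : ∀ t₁ t₃ : ℝ, 0 < t₃ →
      Integrable (fun r => φhat r t₁ t₃ * deriv (fun y => φhat r y t₃) t₁) f.measure)
    (φ : ℝ → ℝ → ℝ → ℝ)
    (hφ : ∀ z x t : ℝ, 0 < t →
      φ z x t = t ^ (-(1 / 2) : ℝ) * φhat z (-x / t) (1 / (3 * t ^ 2)))
    (hPDE : ∀ z x t : ℝ, 0 < t →
      -deriv (fun s => φ z x s) t
        = (2 / 3) * iteratedDeriv 3 (fun y => φ z y t) x + φ z x t / (2 * t)
          + (x / t) * deriv (fun y => φ z y t) x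
          - (2 / t) * φ z x t * ∫ r, φ r x t * deriv (fun y => φ r y t) x ∂f.measure
          - (2 / t) * deriv (fun y => φ z y t) x * ∫ r, (φ r x t) ^ 2 ∂f.measure) :
    ∀ z t₁ t₃ : ℝ, 0 < t₃ →
      deriv (fun s => φhat z t₁ s) t₃
        = -iteratedDeriv 3 (fun y => φhat z y t₃) t₁
          + 3 * deriv (fun y => φhat z y t₃) t₁ * ∫ r, (φhat r t₁ t₃) ^ 2 ∂f.measure
          + 3 * φhat z t₁ t₃ *
              ∫ r, φhat r t₁ t₃ * deriv (fun y => φhat r y t₃) t₁ ∂f.measure :=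
  stmt_7_general f φhat hC3 hC1 φ hφ hPDE
end

section
/- Let r₀ ∈ ℝ, m ∈ ℂ, let U ⊆ ℂ be an open disk centered at r₀, and let E : U → M₂(ℂ) be holomorphic (entrywise) with det E(z) = 1 for all z ∈ U. Define Ψ(z) := E(z)·[[1, (m/(2πi))·Log(z − r₀)],[0,1]] for z ∈ U \ (−∞, r₀], where Log is the principal branch of the logarithm. Then Ψ(z) is invertible for every such z, and on U \ (−∞, r₀] one has the identity ((dΨ/dz)(z)·Ψ(z)^{-1})_{21} = (E'(z)·E(z)^{-1})_{21} − (m/(2πi))·E_{21}(z)²/(z − r₀). In particular, the function z ↦ ((dΨ/dz)(z)·Ψ(z)^{-1})_{21} extends to a meromorphic function on U whose only possible singularity is a simple pole at r₀ with residue −(m/(2πi))·E_{21}(r₀)². -/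
open Matrix

/-!
Only the second rows of `Ψ'` and `Ψ` enter the `(2,1)` entry of `Ψ' Ψ⁻¹`, and since `det Ψ = 1` that entry is
`Ψ'₂₁ Ψ₂₂ - Ψ'₂₂ Ψ₂₁`. Right multiplication by the unipotent factor `[[1, f],[0, 1]]` keeps
`Ψ₂₁ = E₂₁` and changes `Ψ₂₂` to `E₂₁ f + E₂₂`, so the only new term is `-f' E₂₁²`; for
`f = (m/(2πi)) Log(z - r₀)` this is `-(m/(2πi)) E₂₁²/(z - r₀)`. Writing
`E₂₁(z)² = E₂₁(r₀)² + (z - r₀) · dslope (E₂₁²) r₀ z` isolates the simple pole.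
-/

namespace Matrix

noncomputable def entrywiseDeriv {𝕜 : Type*} [NontriviallyNormedField 𝕜] {m n : Type*}
    (F : 𝕜 → Matrix m n 𝕜) (z : 𝕜) : Matrix m n 𝕜 :=
  of fun i j => deriv (fun ζ => F ζ i j) z

section CommRing

variable {R : Type*} [CommRing R]

theorem mul_inv_apply_one_zero_of_det_eq_one (D A : Matrix (Fin 2) (Fin 2) R) (hA : A.det = 1) :
    (D * A⁻¹) 1 0 = D 1 0 * A 1 1 - D 1 1 * A 1 0 := by
  rw [inv_def, hA, Ring.inverse_one, one_smul, adjugate_fin_two, mul_apply, Fin.sum_univ_two]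
  simp only [of_apply, cons_val', cons_val_zero, cons_val_one, empty_val', cons_val_fin_one]
  ring

variable (A : Matrix (Fin 2) (Fin 2) R) (f : R)

@[simp]
theorem mul_unipotent_apply_one_zero : (A * !![1, f; 0, 1]) 1 0 = A 1 0 := by
  simp [mul_apply, Fin.sum_univ_two]

@[simp]
theorem mul_unipotent_apply_one_one : (A * !![1, f; 0, 1]) 1 1 = A 1 0 * f + A 1 1 := by
  simp [mul_apply, Fin.sum_univ_two]

@[simp]
theorem det_mul_unipotent : (A * !![1, f; 0, 1]).det = A.det := by
  simp [det_mul, det_fin_two_of]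

end CommRing

variable {𝕜 : Type*} [NontriviallyNormedField 𝕜]

theorem entrywiseDeriv_mul_inv_apply_one_zero {E : 𝕜 → Matrix (Fin 2) (Fin 2) 𝕜} {z : 𝕜}
    (hdet : (E z).det = 1) :
    (entrywiseDeriv E z * (E z)⁻¹) 1 0 =
      deriv (fun ζ => E ζ 1 0) z * E z 1 1 - deriv (fun ζ => E ζ 1 1) z * E z 1 0 :=
  mul_inv_apply_one_zero_of_det_eq_one _ _ hdet

theorem entrywiseDeriv_mul_inv_mul_unipotent_apply_one_zero {E : 𝕜 → Matrix (Fin 2) (Fin 2) 𝕜}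
    {f : 𝕜 → 𝕜} {z : 𝕜} (h10 : DifferentiableAt 𝕜 (fun ζ => E ζ 1 0) z)
    (h11 : DifferentiableAt 𝕜 (fun ζ => E ζ 1 1) z) (hf : DifferentiableAt 𝕜 f z)
    (hdet : (E z).det = 1) :
    (entrywiseDeriv (fun ζ => E ζ * !![1, f ζ; 0, 1]) z * (E z * !![1, f z; 0, 1])⁻¹) 1 0 =
      (entrywiseDeriv E z * (E z)⁻¹) 1 0 - deriv f z * E z 1 0 ^ 2 := by
  have hΨdet : (E z * !![1, f z; 0, 1]).det = 1 := by rw [det_mul_unipotent, hdet]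
  have hΨ'11 : deriv (fun ζ => E ζ 1 0 * f ζ + E ζ 1 1) z =
      deriv (fun ζ => E ζ 1 0) z * f z + E z 1 0 * deriv f z + deriv (fun ζ => E ζ 1 1) z :=
    ((h10.hasDerivAt.mul hf.hasDerivAt).add h11.hasDerivAt).deriv
  rw [entrywiseDeriv, mul_inv_apply_one_zero_of_det_eq_one _ _ hΨdet,
    entrywiseDeriv_mul_inv_apply_one_zero hdet]
  simp only [of_apply, mul_unipotent_apply_one_zero, mul_unipotent_apply_one_one, hΨ'11]
  ring

theorem differentiableOn_entrywiseDeriv_mul_inv_apply_one_zero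
    {E : ℂ → Matrix (Fin 2) (Fin 2) ℂ} {s : Set ℂ} (hs : IsOpen s)
    (h10 : DifferentiableOn ℂ (fun z => E z 1 0) s) (h11 : DifferentiableOn ℂ (fun z => E z 1 1) s)
    (hdet : ∀ z ∈ s, (E z).det = 1) :
    DifferentiableOn ℂ (fun z => (entrywiseDeriv E z * (E z)⁻¹) 1 0) s :=
  (((h10.deriv hs).mul h11).sub ((h11.deriv hs).mul h10)).congr fun z hz =>
    entrywiseDeriv_mul_inv_apply_one_zero (hdet z hz)

end Matrix

theorem Complex.sub_ofReal_mem_slitPlane {z : ℂ} {r : ℝ} (hz : ¬(z.im = 0 ∧ z.re ≤ r)) :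
    z - r ∈ slitPlane := by
  rw [mem_slitPlane_iff, sub_re, sub_im, ofReal_re, ofReal_im, sub_zero, sub_pos]
  by_cases him : z.im = 0
  · exact .inl (not_le.mp fun hre => hz ⟨him, hre⟩)
  · exact .inr him

theorem div_sub_eq_dslope_add {𝕜 : Type*} [NontriviallyNormedField 𝕜]
    (f : 𝕜 → 𝕜) {a z : 𝕜} (hz : z ≠ a) :
    f z / (z - a) = dslope f a z + f a / (z - a) := by
  rw [dslope_of_ne f hz, slope_def_field, sub_div, sub_add_cancel]

/-- Let `E` be holomorphic on an open disk `U` centered at `r₀ ∈ ℝ`, with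
`det E ≡ 1`, and define `Ψ(z) := E(z)·[[1, (m/(2πi))·Log(z − r₀)],[0,1]]` on `U` minus the cut
`(−∞, r₀]`. Then `Ψ(z)` is invertible there, the identity
`((dΨ/dz)Ψ⁻¹)₂₁ = ((dE/dz)E⁻¹)₂₁ − (m/(2πi))·E₂₁(z)²/(z − r₀)` holds, and in particular
`((dΨ/dz)Ψ⁻¹)₂₁` differs from the simple-pole term with residue `−(m/(2πi))·E₂₁(r₀)²` at `r₀`
by a function holomorphic on `U`. -/
theorem stmt_13 (r₀ : ℝ) (m : ℂ) (ε : ℝ) (hε : 0 < ε)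
    (E : ℂ → Matrix (Fin 2) (Fin 2) ℂ)
    (hE : ∀ i j, DifferentiableOn ℂ (fun z => E z i j) (Metric.ball (r₀ : ℂ) ε))
    (hdet : ∀ z ∈ Metric.ball (r₀ : ℂ) ε, (E z).det = 1)
    (Ψ : ℂ → Matrix (Fin 2) (Fin 2) ℂ)
    (hΨ : ∀ z : ℂ, Ψ z =
      E z * !![1, (m / (2 * Real.pi * Complex.I)) * Complex.log (z - (r₀ : ℂ)); 0, 1]) :
    (∀ z ∈ Metric.ball (r₀ : ℂ) ε \ {z : ℂ | z.im = 0 ∧ z.re ≤ r₀}, IsUnit (Ψ z)) ∧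
    (∀ z ∈ Metric.ball (r₀ : ℂ) ε \ {z : ℂ | z.im = 0 ∧ z.re ≤ r₀},
      ((Matrix.of fun i j => deriv (fun ζ => Ψ ζ i j) z) * (Ψ z)⁻¹) 1 0
        = ((Matrix.of fun i j => deriv (fun ζ => E ζ i j) z) * (E z)⁻¹) 1 0
          - (m / (2 * Real.pi * Complex.I)) * (E z 1 0) ^ 2 / (z - (r₀ : ℂ))) ∧
    (∃ g : ℂ → ℂ, DifferentiableOn ℂ g (Metric.ball (r₀ : ℂ) ε) ∧
      ∀ z ∈ Metric.ball (r₀ : ℂ) ε \ {z : ℂ | z.im = 0 ∧ z.re ≤ r₀},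
        ((Matrix.of fun i j => deriv (fun ζ => Ψ ζ i j) z) * (Ψ z)⁻¹) 1 0
          = g z + (-(m / (2 * Real.pi * Complex.I)) * (E (r₀ : ℂ) 1 0) ^ 2)
              / (z - (r₀ : ℂ))) := by
  set k := m / (2 * Real.pi * Complex.I)
  obtain rfl : Ψ = fun z => E z * !![1, k * Complex.log (z - r₀); 0, 1] := funext hΨ
  have hopen : IsOpen (Metric.ball (r₀ : ℂ) ε) := Metric.isOpen_ball
  have key : ∀ z ∈ Metric.ball (r₀ : ℂ) ε \ {z : ℂ | z.im = 0 ∧ z.re ≤ r₀},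
      (entrywiseDeriv (fun ζ => E ζ * !![1, k * Complex.log (ζ - r₀); 0, 1]) z *
          (E z * !![1, k * Complex.log (z - r₀); 0, 1])⁻¹) 1 0 =
        (entrywiseDeriv E z * (E z)⁻¹) 1 0 - k * E z 1 0 ^ 2 / (z - r₀) := by
    rintro z ⟨hz, hcut⟩
    have hlog : HasDerivAt (fun ζ => k * Complex.log (ζ - r₀)) (k * (1 / (z - r₀))) z :=
      (((hasDerivAt_id z).sub_const _).clog (Complex.sub_ofReal_mem_slitPlane hcut)).const_mul k
    rw [entrywiseDeriv_mul_inv_mul_unipotent_apply_one_zero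
      ((hE 1 0).differentiableAt (hopen.mem_nhds hz)) ((hE 1 1).differentiableAt (hopen.mem_nhds hz))
      hlog.differentiableAt (hdet z hz), hlog.deriv]
    ring
  refine ⟨fun z hz => ?_, key, ?_⟩
  · rw [isUnit_iff_isUnit_det, det_mul_unipotent, hdet z hz.1]
    exact isUnit_one
  refine ⟨fun z => (entrywiseDeriv E z * (E z)⁻¹) 1 0 - k * dslope (fun ζ => E ζ 1 0 ^ 2) r₀ z,
    ?_, fun z hz => ?_⟩
  · have hdslope := (Complex.differentiableOn_dslope
      (hopen.mem_nhds (Metric.mem_ball_self hε))).mpr ((hE 1 0).pow 2)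
    exact (differentiableOn_entrywiseDeriv_mul_inv_apply_one_zero hopen (hE 1 0) (hE 1 1)
      hdet).sub (hdslope.const_mul k)
  · have hz₀ : z ≠ r₀ := fun h => hz.2 (by simp [h])
    refine (key z hz).trans ?_
    beta_reduce
    rw [mul_div_assoc, div_sub_eq_dslope_add (fun ζ => E ζ 1 0 ^ 2) hz₀]
    ring
end
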